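/- arXiv:1902.00657 — 5 statements merged into one kernel-verified Lean document; each statement's English description precedes it below -/
import Mathlib

section
/- Suppose 0 < η_ch ≤ 1, 0 < η_dch ≤ 1, η_ch·η_dch < 1, P_ch > 0, P_dch > 0, and ΔS = P_ch·η_ch − P_dch/η_dch ≥ 0. Let (P̃_ch, P̃_dch) = (ΔS/η_ch, 0). Then the change in net injected power ΔP = (P̃_dch − P̃_ch) − (P_dch − P_ch) satisfies ΔP = (1/(η_dch·η_ch) − 1)·P_dch > 0. -/
/-! Replacing simultaneous operation by pure charging at the same stored-energy change `ΔS` lowers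
the charging power by `Pdch / (ηch * ηdch)` and removes the discharge `Pdch`, so the net injection
rises by `Pdch` times `1 / (ηch * ηdch) - 1`, which is positive since the round-trip efficiency
`ηch * ηdch` is below one. -/

noncomputable def storedEnergyChange (ηch ηdch Pch Pdch : ℝ) : ℝ := Pch * ηch - Pdch / ηdch

def netInjection (Pch Pdch : ℝ) : ℝ := Pdch - Pch

lemma netInjection_equivalent_sub_netInjection {ηch : ℝ} (hch : ηch ≠ 0) (ηdch Pch Pdch : ℝ) :
    netInjection (storedEnergyChange ηch ηdch Pch Pdch / ηch) 0 - netInjection Pch Pdch =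
      (1 / (ηdch * ηch) - 1) * Pdch := by
  unfold netInjection storedEnergyChange
  field_simp
  ring

lemma one_div_sub_one_mul_pos {x P : ℝ} (hx : 0 < x) (hx1 : x < 1) (hP : 0 < P) :
    0 < (1 / x - 1) * P :=
  mul_pos (sub_pos.mpr (one_lt_one_div hx hx1)) hP

theorem storage_equiv_net_power_change_nonneg_general
    (ηch ηdch Pch Pdch ΔS : ℝ)
    (hch : 0 < ηch)
    (hdch : 0 < ηdch)
    (hprod : ηch * ηdch < 1)
    (hPdch : 0 < Pdch)
    (hΔS : ΔS = Pch * ηch - Pdch / ηdch)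
    (Ptch Ptdch : ℝ) (hT : Ptch = ΔS / ηch ∧ Ptdch = 0)
    (ΔP : ℝ) (hΔP : ΔP = (Ptdch - Ptch) - (Pdch - Pch)) :
    ΔP = (1 / (ηdch * ηch) - 1) * Pdch ∧ 0 < ΔP := by
  obtain ⟨rfl, rfl⟩ := hT
  have hΔP_eq : ΔP = (1 / (ηdch * ηch) - 1) * Pdch := by
    rw [hΔP, hΔS, ← netInjection_equivalent_sub_netInjection hch.ne']
    rfl
  refine ⟨hΔP_eq, hΔP_eq ▸ one_div_sub_one_mul_pos (by positivity) ?_ hPdch⟩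
  rwa [mul_comm]

theorem storage_equiv_net_power_change_nonneg
    (ηch ηdch Pch Pdch ΔS : ℝ)
    (hch : 0 < ηch) (hch1 : ηch ≤ 1)
    (hdch : 0 < ηdch) (hdch1 : ηdch ≤ 1)
    (hprod : ηch * ηdch < 1)
    (hPch : 0 < Pch) (hPdch : 0 < Pdch)
    (hΔS : ΔS = Pch * ηch - Pdch / ηdch) (hΔSnn : 0 ≤ ΔS)
    (Ptch Ptdch : ℝ) (hT : Ptch = ΔS / ηch ∧ Ptdch = 0)
    (ΔP : ℝ) (hΔP : ΔP = (Ptdch - Ptch) - (Pdch - Pch)) :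
    ΔP = (1 / (ηdch * ηch) - 1) * Pdch ∧ 0 < ΔP :=
  storage_equiv_net_power_change_nonneg_general ηch ηdch Pch Pdch ΔS hch hdch hprod hPdch hΔS Ptch
    Ptdch hT ΔP hΔP
end

section
/- Suppose 0 < η_ch ≤ 1, 0 < η_dch ≤ 1, η_ch·η_dch < 1, P_ch > 0, P_dch > 0, and ΔS = P_ch·η_ch − P_dch/η_dch < 0. Let (P̃_ch, P̃_dch) = (0, −ΔS·η_dch). Then the change in net injected power ΔP = (P̃_dch − P̃_ch) − (P_dch − P_ch) satisfies ΔP = (1 − η_ch·η_dch)·P_ch > 0. -/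
theorem discharge_only_net_power_change (ηch ηdch Pch Pdch : ℝ) (hdch : ηdch ≠ 0) :
    -(Pch * ηch - Pdch / ηdch) * ηdch - (Pdch - Pch) = (1 - ηch * ηdch) * Pch := by
  field_simp
  ring

theorem storage_equiv_net_power_change_neg_general
    (ηch ηdch Pch Pdch ΔS : ℝ)
    (hdch : 0 < ηdch)
    (hprod : ηch * ηdch < 1)
    (hPch : 0 < Pch)
    (hΔS : ΔS = Pch * ηch - Pdch / ηdch)
    (Ptch Ptdch : ℝ) (hT : Ptch = 0 ∧ Ptdch = -ΔS * ηdch)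
    (ΔP : ℝ) (hΔP : ΔP = (Ptdch - Ptch) - (Pdch - Pch)) :
    ΔP = (1 - ηch * ηdch) * Pch ∧ 0 < ΔP := by
  obtain ⟨rfl, rfl⟩ := hT
  have hΔP_eq : ΔP = (1 - ηch * ηdch) * Pch := by
    rw [hΔP, hΔS, sub_zero, discharge_only_net_power_change ηch ηdch Pch Pdch hdch.ne']
  exact ⟨hΔP_eq, hΔP_eq ▸ mul_pos (sub_pos.mpr hprod) hPch⟩

theorem storage_equiv_net_power_change_neg
    (ηch ηdch Pch Pdch ΔS : ℝ)
    (hch : 0 < ηch) (hch1 : ηch ≤ 1)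
    (hdch : 0 < ηdch) (hdch1 : ηdch ≤ 1)
    (hprod : ηch * ηdch < 1)
    (hPch : 0 < Pch) (hPdch : 0 < Pdch)
    (hΔS : ΔS = Pch * ηch - Pdch / ηdch) (hΔSneg : ΔS < 0)
    (Ptch Ptdch : ℝ) (hT : Ptch = 0 ∧ Ptdch = -ΔS * ηdch)
    (ΔP : ℝ) (hΔP : ΔP = (Ptdch - Ptch) - (Pdch - Pch)) :
    ΔP = (1 - ηch * ηdch) * Pch ∧ 0 < ΔP :=
  storage_equiv_net_power_change_neg_general ηch ηdch Pch Pdch ΔS hdch hprod hPch hΔS Ptch Ptdch hT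
    ΔP hΔP
end

section
/- The change in net injected storage power under the storage-energy-equivalent transformation is always nonnegative: for any P_ch, P_dch ≥ 0 with efficiencies η_ch, η_dch ∈ (0,1], (P̃_dch − P̃_ch) − (P_dch − P_ch) ≥ 0. -/
/-!
On the charging branch (`ΔS ≥ 0`) the net change equals `P_dch · ((η_ch η_dch)⁻¹ - 1)`,
on the discharging branch `P_ch · (1 - η_ch η_dch)`; both are nonnegative
because the round-trip efficiency `η_ch η_dch` lies in `(0, 1]`.
-/

lemma net_power_change_of_charge {ηch ηdch : ℝ} (hch : ηch ≠ 0) (hdch : ηdch ≠ 0)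
    (Pch Pdch : ℝ) :
    (0 - (Pch * ηch - Pdch / ηdch) / ηch) - (Pdch - Pch) = Pdch * ((ηch * ηdch)⁻¹ - 1) := by
  field_simp
  ring

lemma net_power_change_of_discharge {ηdch : ℝ} (hdch : ηdch ≠ 0) (ηch Pch Pdch : ℝ) :
    (-(Pch * ηch - Pdch / ηdch) * ηdch - 0) - (Pdch - Pch) = Pch * (1 - ηch * ηdch) := by
  field_simp
  ring

theorem storage_equiv_net_power_change_always_nonneg
    (ηch ηdch Pch Pdch ΔS : ℝ)
    (hch : 0 < ηch) (hch1 : ηch ≤ 1)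
    (hdch : 0 < ηdch) (hdch1 : ηdch ≤ 1)
    (hPch : 0 ≤ Pch) (hPdch : 0 ≤ Pdch)
    (hΔS : ΔS = Pch * ηch - Pdch / ηdch)
    (Ptch Ptdch : ℝ)
    (hT : (Ptch, Ptdch) = if 0 ≤ ΔS then (ΔS / ηch, (0:ℝ)) else ((0:ℝ), -ΔS * ηdch)) :
    0 ≤ (Ptdch - Ptch) - (Pdch - Pch) := by
  have hη_pos : 0 < ηch * ηdch := mul_pos hch hdch
  have hη_le_one : ηch * ηdch ≤ 1 := mul_le_one₀ hch1 hdch.le hdch1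
  subst hΔS
  split_ifs at hT with hcharge
  · obtain ⟨rfl, rfl⟩ := Prod.mk.inj hT
    rw [net_power_change_of_charge hch.ne' hdch.ne']
    exact mul_nonneg hPdch (sub_nonneg.2 ((one_le_inv₀ hη_pos).2 hη_le_one))
  · obtain ⟨rfl, rfl⟩ := Prod.mk.inj hT
    rw [net_power_change_of_discharge hdch.ne']
    exact mul_nonneg hPch (sub_nonneg.2 hη_le_one)
end

section
/- Suppose η_ch, η_dch ∈ (0,1] with η_ch·η_dch < 1, P_ch, P_dch ≥ 0, P_RES ≥ P_curt ≥ 0, and the condition (P_RES − P_curt)/(1 − η_ch·η_dch) ≥ min(P_ch, P_dch/(η_ch·η_dch)) holds. Then the modified curtailment P̃_curt = P_curt + ΔP, where ΔP = (P̃_dch − P̃_ch) − (P_dch − P_ch) under the storage-energy-equivalent transformation, satisfies 0 ≤ P̃_curt ≤ P_RES. -/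
/-!
Writing `m = P_dch / (η_ch η_dch)` for the discharge measured in charging terms, the energy
change is `ΔS = η_ch (P_ch - m)`, so its sign decides whether `P_ch` or `m` is the smaller one,
and in both cases the transformation raises the net injection by exactly
`ΔP = min P_ch m · (1 - η_ch η_dch)`. This is nonnegative, and the hypothesis on the headroom
`P_RES - P_curt` says precisely that it does not exceed that headroom.
-/

/-- The pair `(P̃_ch, P̃_dch)` of the paper. -/
noncomputable def storageEquivalent (ηch ηdch ΔS : ℝ) : ℝ × ℝ :=
  if 0 ≤ ΔS then (ΔS / ηch, 0) else (0, -ΔS * ηdch)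

theorem storageEquivalent_netInjection_sub {ηch ηdch : ℝ} (hch : 0 < ηch) (hdch : ηdch ≠ 0)
    (Pch Pdch : ℝ) :
    let P := storageEquivalent ηch ηdch (Pch * ηch - Pdch / ηdch)
    (P.2 - P.1) - (Pdch - Pch) = min Pch (Pdch / (ηch * ηdch)) * (1 - ηch * ηdch) := by
  have hΔS : Pch * ηch - Pdch / ηdch = ηch * (Pch - Pdch / (ηch * ηdch)) := by
    field_simp
  simp only [storageEquivalent, hΔS]
  split_ifs with h
  · rw [min_eq_right (sub_nonneg.mp (nonneg_of_mul_nonneg_right h hch))]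
    field_simp
    ring
  · rw [min_eq_left (sub_nonpos.mp (nonpos_of_mul_nonpos_right (not_le.mp h).le hch))]
    field_simp
    ring

theorem modified_curtailment_feasible_general
    (ηch ηdch Pch Pdch ΔS PRES Pcurt : ℝ)
    (hch : 0 < ηch)
    (hdch : 0 < ηdch)
    (hprod : ηch * ηdch < 1)
    (hPch : 0 ≤ Pch) (hPdch : 0 ≤ Pdch)
    (hcurt0 : 0 ≤ Pcurt)
    (hΔS : ΔS = Pch * ηch - Pdch / ηdch)
    (hcond : (PRES - Pcurt) / (1 - ηch * ηdch) ≥ min Pch (Pdch / (ηch * ηdch)))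
    (Ptch Ptdch : ℝ)
    (hT : (Ptch, Ptdch) = if 0 ≤ ΔS then (ΔS / ηch, (0:ℝ)) else ((0:ℝ), -ΔS * ηdch))
    (ΔP : ℝ) (hΔP : ΔP = (Ptdch - Ptch) - (Pdch - Pch)) :
    0 ≤ Pcurt + ΔP ∧ Pcurt + ΔP ≤ PRES := by
  have hT' : (Ptch, Ptdch) = storageEquivalent ηch ηdch ΔS := hT
  have hnet := storageEquivalent_netInjection_sub hch hdch.ne' Pch Pdch
  rw [← hΔS, ← hT'] at hnet
  replace hΔP : ΔP = min Pch (Pdch / (ηch * ηdch)) * (1 - ηch * ηdch) := hΔP.trans hnet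
  have hgap : 0 < 1 - ηch * ηdch := sub_pos.mpr hprod
  have hΔP_nonneg : 0 ≤ ΔP := hΔP ▸ mul_nonneg (le_min hPch (by positivity)) hgap.le
  have hΔP_le : ΔP ≤ PRES - Pcurt := hΔP ▸ (le_div_iff₀ hgap).mp hcond
  constructor <;> linarith

theorem modified_curtailment_feasible
    (ηch ηdch Pch Pdch ΔS PRES Pcurt : ℝ)
    (hch : 0 < ηch) (hch1 : ηch ≤ 1)
    (hdch : 0 < ηdch) (hdch1 : ηdch ≤ 1)
    (hprod : ηch * ηdch < 1)
    (hPch : 0 ≤ Pch) (hPdch : 0 ≤ Pdch)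
    (hcurt0 : 0 ≤ Pcurt) (hcurt1 : Pcurt ≤ PRES)
    (hΔS : ΔS = Pch * ηch - Pdch / ηdch)
    (hcond : (PRES - Pcurt) / (1 - ηch * ηdch) ≥ min Pch (Pdch / (ηch * ηdch)))
    (Ptch Ptdch : ℝ)
    (hT : (Ptch, Ptdch) = if 0 ≤ ΔS then (ΔS / ηch, (0:ℝ)) else ((0:ℝ), -ΔS * ηdch))
    (ΔP : ℝ) (hΔP : ΔP = (Ptdch - Ptch) - (Pdch - Pch)) :
    0 ≤ Pcurt + ΔP ∧ Pcurt + ΔP ≤ PRES :=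
  modified_curtailment_feasible_general ηch ηdch Pch Pdch ΔS PRES Pcurt hch hdch hprod hPch hPdch
    hcurt0 hΔS hcond Ptch Ptdch hT ΔP hΔP
end

section
/- Consider minimizing a strictly increasing function of grid purchase c(P_e) subject to the power balance P_e + (P_dch − P_ch) + P_RES − P_curt = L with P_curt = 0 fixed, P_ch, P_dch ≥ 0, storage net energy change ΔS = P_ch·η_ch − P_dch/η_dch fixed, and η_ch·η_dch < 1. Then at any optimum, P_ch·P_dch = 0. -/
/-!
Lowering the charging power by `t` and the discharging power by `t * ηch * ηdch` leaves the net
stored energy unchanged but raises the net injected power by `t * (1 - ηch * ηdch) > 0`, so the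
grid purchase can drop by that amount. While both powers are positive some `t > 0` is admissible,
so an optimum cannot charge and discharge at once.
-/

/-- Points are `(Pe, Pch, Pdch)`. -/
def dispatchFeasible (ηch ηdch PRES L S₀ : ℝ) : Set (ℝ × ℝ × ℝ) :=
  {p | p.1 + (p.2.2 - p.2.1) + PRES = L ∧ 0 ≤ p.2.1 ∧ 0 ≤ p.2.2 ∧
    p.2.1 * ηch - p.2.2 / ηdch = S₀}

theorem roundTrip_mem_dispatchFeasible {ηch ηdch PRES L S₀ Pe Pch Pdch t : ℝ} (hdch : ηdch ≠ 0)
    (hmem : (Pe, Pch, Pdch) ∈ dispatchFeasible ηch ηdch PRES L S₀)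
    (htch : t ≤ Pch) (htdch : t * (ηch * ηdch) ≤ Pdch) :
    (Pe - t * (1 - ηch * ηdch), Pch - t, Pdch - t * (ηch * ηdch)) ∈
      dispatchFeasible ηch ηdch PRES L S₀ := by
  obtain ⟨hbal, -, -, hS⟩ := hmem
  refine ⟨by linarith, by linarith, by linarith, ?_⟩
  rw [← hS]
  field_simp
  ring

theorem exists_pos_le_and_mul_le {a b k : ℝ} (ha : 0 < a) (hb : 0 < b) (hk : 0 < k) :
    ∃ t, 0 < t ∧ t ≤ a ∧ t * k ≤ b :=
  ⟨min a (b / k), lt_min ha (div_pos hb hk), min_le_left _ _,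
    (le_div_iff₀ hk).mp (min_le_right _ _)⟩

theorem exists_fst_lt_of_simultaneous {ηch ηdch PRES L S₀ Pe Pch Pdch : ℝ}
    (hch : 0 < ηch) (hdch : 0 < ηdch) (hprod : ηch * ηdch < 1)
    (hmem : (Pe, Pch, Pdch) ∈ dispatchFeasible ηch ηdch PRES L S₀)
    (hPch : 0 < Pch) (hPdch : 0 < Pdch) :
    ∃ q ∈ dispatchFeasible ηch ηdch PRES L S₀, q.1 < Pe := by
  obtain ⟨t, ht, htch, htdch⟩ := exists_pos_le_and_mul_le hPch hPdch (mul_pos hch hdch)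
  refine ⟨_, roundTrip_mem_dispatchFeasible hdch.ne' hmem htch htdch, ?_⟩
  have : 0 < t * (1 - ηch * ηdch) := mul_pos ht (sub_pos.mpr hprod)
  exact sub_lt_self Pe this

theorem no_simultaneous_charge_discharge_at_optimum_general
    (ηch ηdch PRES L S₀ : ℝ)
    (hch : 0 < ηch)
    (hdch : 0 < ηdch)
    (hprod : ηch * ηdch < 1)
    (c : ℝ → ℝ) (hc : StrictMono c)
    (K : Set (ℝ × ℝ × ℝ))
    (hK : K = {p : ℝ × ℝ × ℝ |
      p.1 + (p.2.2 - p.2.1) + PRES - 0 = L ∧ 0 ≤ p.2.1 ∧ 0 ≤ p.2.2 ∧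
      p.2.1 * ηch - p.2.2 / ηdch = S₀})
    (Pe Pch Pdch : ℝ)
    (hopt : (Pe, Pch, Pdch) ∈ K ∧ ∀ q ∈ K, c Pe ≤ c q.1) :
    Pch * Pdch = 0 := by
  by_contra hne
  have hK' : K = dispatchFeasible ηch ηdch PRES L S₀ := by
    simp only [hK, sub_zero, dispatchFeasible]
  obtain ⟨hmem, hmin⟩ := hopt
  rw [hK'] at hmem hmin
  have hPch : 0 < Pch := hmem.2.1.lt_of_ne' (left_ne_zero_of_mul hne)
  have hPdch : 0 < Pdch := hmem.2.2.1.lt_of_ne' (right_ne_zero_of_mul hne)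
  obtain ⟨q, hq, hlt⟩ := exists_fst_lt_of_simultaneous hch hdch hprod hmem hPch hPdch
  exact (hmin q hq).not_gt (hc hlt)

theorem no_simultaneous_charge_discharge_at_optimum
    (ηch ηdch PRES L S₀ : ℝ)
    (hch : 0 < ηch) (hch1 : ηch ≤ 1)
    (hdch : 0 < ηdch) (hdch1 : ηdch ≤ 1)
    (hprod : ηch * ηdch < 1)
    (c : ℝ → ℝ) (hc : StrictMono c)
    (K : Set (ℝ × ℝ × ℝ))
    (hK : K = {p : ℝ × ℝ × ℝ |
      p.1 + (p.2.2 - p.2.1) + PRES - 0 = L ∧ 0 ≤ p.2.1 ∧ 0 ≤ p.2.2 ∧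
      p.2.1 * ηch - p.2.2 / ηdch = S₀})
    (Pe Pch Pdch : ℝ)
    (hopt : (Pe, Pch, Pdch) ∈ K ∧ ∀ q ∈ K, c Pe ≤ c q.1) :
    Pch * Pdch = 0 :=
  no_simultaneous_charge_discharge_at_optimum_general ηch ηdch PRES L S₀ hch hdch hprod c hc K hK Pe
    Pch Pdch hopt
end
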